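/- arXiv:1202.2986 — 2 statements merged into one kernel-verified Lean document; each statement's English description precedes it below -/
import Mathlib

section
/- Let a ≥ 4 be an even integer, and let G be the Grundy sequence of S({1, a, 2a − 1}). Then: (i) G(n + 2a) = G(n) for all n ∈ ℕ; (ii) for 0 ≤ n < 2a: G(n) = n mod 2 if n < a; G(a) = 2; G(n) = (n − a − 1) mod 2 if a + 1 ≤ n ≤ 2a − 2; and G(2a − 1) = 2; and (iii) for every c ≥ 1, G(n + c) ≠ G(n) holds for all n if and only if c = s + 2am for some m ∈ ℕ and s ∈ {1, a, 2a − 1} (the subtraction set is non-expandable). -/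
/-- The minimum excludant: the least natural number not in `X`. -/
noncomputable def mex (X : Set ℕ) : ℕ := sInf {m | m ∉ X}

/-- `G` is the Grundy (nim-value) sequence of the subtraction game with
subtraction set `S`: `G n = mex { G (n - s) : s ∈ S, s ≤ n }`. -/
def IsGrundy (S : Finset ℕ) (G : ℕ → ℕ) : Prop :=
  ∀ n, G n = mex {v | ∃ s ∈ S, s ≤ n ∧ v = G (n - s)}

lemma mex_eq {X : Set ℕ} {k : ℕ} (h1 : k ∉ X) (h2 : ∀ j, j < k → j ∈ X) : mex X = k := by
  refine le_antisymm (Nat.sInf_le h1) (le_csInf ⟨k, h1⟩ ?_)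
  intro m hm
  by_contra h
  push_neg at h
  exact hm (h2 m h)

/-- One period of the Grundy sequence. -/
def pval (a r : ℕ) : ℕ :=
  if r < a then r % 2 else if r = a then 2 else if r = 2 * a - 1 then 2 else (r - a - 1) % 2

lemma pval_lt {a r : ℕ} (h : r < a) : pval a r = r % 2 := if_pos h

lemma pval_a {a : ℕ} (h : 0 < a) : pval a a = 2 := by
  unfold pval
  rw [if_neg (lt_irrefl a), if_pos rfl]

lemma pval_mid {a r : ℕ} (ha : 2 ≤ a) (h1 : a < r) (h2 : r ≤ 2 * a - 2) :
    pval a r = (r - a - 1) % 2 := by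
  unfold pval
  rw [if_neg (show ¬(r < a) by omega), if_neg (show ¬(r = a) by omega),
    if_neg (show ¬(r = 2 * a - 1) by omega)]

lemma pval_last {a : ℕ} (h : 2 ≤ a) : pval a (2 * a - 1) = 2 := by
  unfold pval
  rw [if_neg (show ¬(2 * a - 1 < a) by omega), if_neg (show ¬(2 * a - 1 = a) by omega),
    if_pos rfl]

lemma pstep (a b : ℕ) (ha : 4 ≤ a) (hb : a = b + b) :
    ∀ u, u < 2 * a - 1 → pval a (u + 1) ≠ pval a u := by
  intro u hu
  rcases (show u < a - 1 ∨ u = a - 1 ∨ u = a ∨ (a + 1 ≤ u ∧ u ≤ 2 * a - 3) ∨ u = 2 * a - 2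
    by omega) with h | h | h | ⟨h1, h2⟩ | h
  · rw [pval_lt (by omega), pval_lt (by omega)]; omega
  · rw [show u + 1 = a by omega, pval_a (by omega), pval_lt (by omega)]; omega
  · rw [pval_mid (by omega) (by omega) (by omega), h, pval_a (by omega)]; omega
  · rw [pval_mid (by omega) (by omega) (by omega), pval_mid (by omega) (by omega) (by omega)]
    omega
  · rw [show u + 1 = 2 * a - 1 by omega, pval_last (by omega),
      pval_mid (by omega) (by omega) (by omega)]
    omega

lemma optset {a : ℕ} {G : ℕ → ℕ} (n v : ℕ) :
    (v ∈ {v | ∃ s ∈ ({1, a, 2 * a - 1} : Finset ℕ), s ≤ n ∧ v = G (n - s)}) ↔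
      ((1 ≤ n ∧ v = G (n - 1)) ∨ (a ≤ n ∧ v = G (n - a)) ∨
        (2 * a - 1 ≤ n ∧ v = G (n - (2 * a - 1)))) := by
  simp only [Set.mem_setOf_eq, Finset.mem_insert, Finset.mem_singleton]
  constructor
  · rintro ⟨s, (rfl | rfl | rfl), hs, rfl⟩
    · exact Or.inl ⟨hs, rfl⟩
    · exact Or.inr (Or.inl ⟨hs, rfl⟩)
    · exact Or.inr (Or.inr ⟨hs, rfl⟩)
  · rintro (⟨h1, h2⟩ | ⟨h1, h2⟩ | ⟨h1, h2⟩)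
    · exact ⟨1, Or.inl rfl, h1, h2⟩
    · exact ⟨a, Or.inr (Or.inl rfl), h1, h2⟩
    · exact ⟨2 * a - 1, Or.inr (Or.inr rfl), h1, h2⟩

lemma grundy_val (a b : ℕ) (ha : 4 ≤ a) (hb : a = b + b) (G : ℕ → ℕ)
    (hG : IsGrundy {1, a, 2 * a - 1} G) :
    ∀ n N r, (∃ q, N = 2 * a * q) → r < 2 * a → n = N + r → G n = pval a r := by
  intro n
  induction n using Nat.strong_induction_on with
  | _ n IH =>
  intro N r hN hr hn
  have hval : ∀ m N' t, m < n → (∃ q, N' = 2 * a * q) → t < 2 * a → m = N' + t →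
      G m = pval a t := fun m N' t h1 h2 h3 h4 => IH m h1 N' t h2 h3 h4
  have hsplit : N = 0 ∨ ∃ N', (∃ q, N' = 2 * a * q) ∧ N = N' + 2 * a := by
    obtain ⟨q, rfl⟩ := hN
    cases q with
    | zero => exact Or.inl (by ring)
    | succ q' => exact Or.inr ⟨2 * a * q', ⟨q', rfl⟩, by ring⟩
  rw [hG n]
  by_cases h0 : r = 0
  · subst h0
    have hp : pval a 0 = 0 := by rw [pval_lt (by omega)]
    rw [hp]
    refine mex_eq ?_ (fun j hj => absurd hj (by omega))
    intro hmm
    rw [optset] at hmm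
    rcases hmm with ⟨h1, h2⟩ | ⟨h1, h2⟩ | ⟨h1, h2⟩ <;>
      rcases hsplit with h3 | ⟨N', hN', h3⟩
    · omega
    · have h4 := hval (n - 1) N' (2 * a - 1) (by omega) hN' (by omega) (by omega)
      rw [pval_last (by omega)] at h4
      omega
    · omega
    · have h4 := hval (n - a) N' a (by omega) hN' (by omega) (by omega)
      rw [pval_a (by omega)] at h4
      omega
    · omega
    · have h4 := hval (n - (2 * a - 1)) N' 1 (by omega) hN' (by omega) (by omega)
      rw [pval_lt (by omega)] at h4
      omega
  by_cases hlt : r < a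
  · rcases (show r % 2 = 1 ∨ r % 2 = 0 by omega) with hpar | hpar
    · -- r odd, 1 ≤ r ≤ a - 1, value 1
      have hp : pval a r = 1 := by rw [pval_lt hlt]; omega
      rw [hp]
      have h4 := hval (n - 1) N (r - 1) (by omega) hN (by omega) (by omega)
      rw [pval_lt (by omega)] at h4
      refine mex_eq ?_ ?_
      · intro hmm
        rw [optset] at hmm
        rcases hmm with ⟨h1, h2⟩ | ⟨h1, h2⟩ | ⟨h1, h2⟩
        · omega
        · rcases hsplit with h3 | ⟨N', hN', h3⟩
          · omega
          · by_cases hre : r = a - 1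
            · have h5 := hval (n - a) N' (2 * a - 1) (by omega) hN' (by omega) (by omega)
              rw [pval_last (by omega)] at h5
              omega
            · have h5 := hval (n - a) N' (r + a) (by omega) hN' (by omega) (by omega)
              rw [pval_mid (by omega) (by omega) (by omega)] at h5
              omega
        · rcases hsplit with h3 | ⟨N', hN', h3⟩
          · omega
          · by_cases hre : r = a - 1
            · have h5 := hval (n - (2 * a - 1)) N' a (by omega) hN' (by omega) (by omega)
              rw [pval_a (by omega)] at h5
              omega
            · have h5 := hval (n - (2 * a - 1)) N' (r + 1) (by omega) hN' (by omega) (by omega)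
              rw [pval_lt (by omega)] at h5
              omega
      · intro j hj
        have hj0 : j = 0 := by omega
        subst hj0
        rw [optset]
        exact Or.inl ⟨by omega, by omega⟩
    · -- r even, 2 ≤ r ≤ a - 2, value 0
      have hp : pval a r = 0 := by rw [pval_lt hlt]; omega
      rw [hp]
      refine mex_eq ?_ (fun j hj => absurd hj (by omega))
      intro hmm
      rw [optset] at hmm
      rcases hmm with ⟨h1, h2⟩ | ⟨h1, h2⟩ | ⟨h1, h2⟩
      · have h4 := hval (n - 1) N (r - 1) (by omega) hN (by omega) (by omega)
        rw [pval_lt (by omega)] at h4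
        omega
      · rcases hsplit with h3 | ⟨N', hN', h3⟩
        · omega
        · have h5 := hval (n - a) N' (r + a) (by omega) hN' (by omega) (by omega)
          rw [pval_mid (by omega) (by omega) (by omega)] at h5
          omega
      · rcases hsplit with h3 | ⟨N', hN', h3⟩
        · omega
        · have h5 := hval (n - (2 * a - 1)) N' (r + 1) (by omega) hN' (by omega) (by omega)
          rw [pval_lt (by omega)] at h5
          omega
  by_cases hra : r = a
  · have hp : pval a r = 2 := by rw [hra, pval_a (by omega)]
    rw [hp]
    have h4 := hval (n - 1) N (a - 1) (by omega) hN (by omega) (by omega)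
    rw [pval_lt (by omega)] at h4
    have h5 := hval (n - a) N 0 (by omega) hN (by omega) (by omega)
    rw [pval_lt (by omega)] at h5
    refine mex_eq ?_ ?_
    · intro hmm
      rw [optset] at hmm
      rcases hmm with ⟨h1, h2⟩ | ⟨h1, h2⟩ | ⟨h1, h2⟩
      · omega
      · omega
      · rcases hsplit with h3 | ⟨N', hN', h3⟩
        · omega
        · have h6 := hval (n - (2 * a - 1)) N' (a + 1) (by omega) hN' (by omega) (by omega)
          rw [pval_mid (by omega) (by omega) (by omega)] at h6
          omega
    · intro j hj
      rw [optset]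
      rcases (show j = 0 ∨ j = 1 by omega) with rfl | rfl
      · exact Or.inr (Or.inl ⟨by omega, by omega⟩)
      · exact Or.inl ⟨by omega, by omega⟩
  by_cases hrl : r = 2 * a - 1
  · have hp : pval a r = 2 := by rw [hrl, pval_last (by omega)]
    rw [hp]
    have h4 := hval (n - 1) N (2 * a - 2) (by omega) hN (by omega) (by omega)
    rw [pval_mid (by omega) (by omega) (by omega)] at h4
    have h5 := hval (n - a) N (a - 1) (by omega) hN (by omega) (by omega)
    rw [pval_lt (by omega)] at h5
    have h6 := hval (n - (2 * a - 1)) N 0 (by omega) hN (by omega) (by omega)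
    rw [pval_lt (by omega)] at h6
    refine mex_eq ?_ ?_
    · intro hmm
      rw [optset] at hmm
      rcases hmm with ⟨h1, h2⟩ | ⟨h1, h2⟩ | ⟨h1, h2⟩ <;> omega
    · intro j hj
      rw [optset]
      rcases (show j = 0 ∨ j = 1 by omega) with rfl | rfl
      · exact Or.inr (Or.inr ⟨by omega, by omega⟩)
      · exact Or.inl ⟨by omega, by omega⟩
  -- a < r < 2a - 1
  rcases (show r % 2 = 1 ∨ r % 2 = 0 by omega) with hpar | hpar
  · -- r odd, a + 1 ≤ r ≤ 2a - 3, value 0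
    have hp : pval a r = 0 := by
      rw [pval_mid (by omega) (by omega) (by omega)]; omega
    rw [hp]
    refine mex_eq ?_ (fun j hj => absurd hj (by omega))
    intro hmm
    rw [optset] at hmm
    rcases hmm with ⟨h1, h2⟩ | ⟨h1, h2⟩ | ⟨h1, h2⟩
    · by_cases hre : r = a + 1
      · have h4 := hval (n - 1) N a (by omega) hN (by omega) (by omega)
        rw [pval_a (by omega)] at h4
        omega
      · have h4 := hval (n - 1) N (r - 1) (by omega) hN (by omega) (by omega)
        rw [pval_mid (by omega) (by omega) (by omega)] at h4
        omega
    · have h4 := hval (n - a) N (r - a) (by omega) hN (by omega) (by omega)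
      rw [pval_lt (by omega)] at h4
      omega
    · rcases hsplit with h3 | ⟨N', hN', h3⟩
      · omega
      · have h4 := hval (n - (2 * a - 1)) N' (r + 1) (by omega) hN' (by omega) (by omega)
        rw [pval_mid (by omega) (by omega) (by omega)] at h4
        omega
  · -- r even, a + 2 ≤ r ≤ 2a - 2, value 1
    have hp : pval a r = 1 := by
      rw [pval_mid (by omega) (by omega) (by omega)]; omega
    rw [hp]
    have h4 := hval (n - 1) N (r - 1) (by omega) hN (by omega) (by omega)
    rw [pval_mid (by omega) (by omega) (by omega)] at h4
    refine mex_eq ?_ ?_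
    · intro hmm
      rw [optset] at hmm
      rcases hmm with ⟨h1, h2⟩ | ⟨h1, h2⟩ | ⟨h1, h2⟩
      · omega
      · have h5 := hval (n - a) N (r - a) (by omega) hN (by omega) (by omega)
        rw [pval_lt (by omega)] at h5
        omega
      · rcases hsplit with h3 | ⟨N', hN', h3⟩
        · omega
        · by_cases hre : r = 2 * a - 2
          · have h5 := hval (n - (2 * a - 1)) N' (2 * a - 1) (by omega) hN' (by omega) (by omega)
            rw [pval_last (by omega)] at h5
            omega
          · have h5 := hval (n - (2 * a - 1)) N' (r + 1) (by omega) hN' (by omega) (by omega)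
            rw [pval_mid (by omega) (by omega) (by omega)] at h5
            omega
    · intro j hj
      have hj0 : j = 0 := by omega
      subst hj0
      rw [optset]
      exact Or.inl ⟨by omega, by omega⟩

theorem stmt_5 (a : ℕ) (ha : 4 ≤ a) (haeven : Even a) (G : ℕ → ℕ)
    (hG : IsGrundy {1, a, 2 * a - 1} G) :
    (∀ n, G (n + 2 * a) = G n) ∧
    (∀ n < 2 * a,
      (n < a → G n = n % 2) ∧
      (n = a → G n = 2) ∧
      (a + 1 ≤ n → n ≤ 2 * a - 2 → G n = (n - a - 1) % 2) ∧
      (n = 2 * a - 1 → G n = 2)) ∧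
    (∀ c, 1 ≤ c →
      ((∀ n, G (n + c) ≠ G n) ↔
        ∃ s m : ℕ, c = s + 2 * a * m ∧ (s = 1 ∨ s = a ∨ s = 2 * a - 1))) := by
  obtain ⟨b, hb⟩ := haeven
  have hval := grundy_val a b ha hb G hG
  have hdec : ∀ n : ℕ, ∃ N r, (∃ q, N = 2 * a * q) ∧ r < 2 * a ∧ n = N + r := by
    intro n
    exact ⟨2 * a * (n / (2 * a)), n % (2 * a), ⟨_, rfl⟩, Nat.mod_lt n (by omega),
      (Nat.div_add_mod n (2 * a)).symm⟩
  refine ⟨?_, ?_, ?_⟩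
  · -- periodicity
    intro n
    obtain ⟨N, r, hN, hr, rfl⟩ := hdec n
    have hN2 : ∃ q, N + 2 * a = 2 * a * q := by
      obtain ⟨q, rfl⟩ := hN; exact ⟨q + 1, by ring⟩
    rw [hval (N + r + 2 * a) (N + 2 * a) r hN2 hr (by omega), hval (N + r) N r hN hr rfl]
  · -- values on one period
    intro n hn
    have e : G n = pval a n := hval n 0 n ⟨0, by ring⟩ hn (by omega)
    refine ⟨fun h => ?_, fun h => ?_, fun h1 h2 => ?_, fun h => ?_⟩
    · rw [e, pval_lt h]
    · rw [e, h, pval_a (by omega)]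
    · rw [e, pval_mid (by omega) (by omega) h2]
    · rw [e, h, pval_last (by omega)]
  · -- safe additions
    intro c hc
    constructor
    · intro hsafe
      obtain ⟨N, r, hN, hr, rfl⟩ := hdec c
      have hN2 : ∃ q, N + 2 * a = 2 * a * q := by
        obtain ⟨q, hq⟩ := hN; exact ⟨q + 1, by rw [hq]; ring⟩
      have hres : r = 1 ∨ r = a ∨ r = 2 * a - 1 := by
        by_contra hcon
        push_neg at hcon
        obtain ⟨hc1, hc2, hc3⟩ := hcon
        rcases (show r % 2 = 0 ∨ r % 2 = 1 by omega) with hpar | hpar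
        · by_cases hsm : r < a
          · -- counterexample n = 0
            have e1 : G (0 + (N + r)) = pval a r := hval _ N r hN hr (by omega)
            have e2 : G 0 = pval a 0 := hval 0 0 0 ⟨0, by ring⟩ (by omega) (by omega)
            refine hsafe 0 ?_
            rw [e1, e2, pval_lt (by omega), pval_lt (by omega)]
            omega
          · -- r even, a + 2 ≤ r ≤ 2a - 2 : counterexample n = 2a - r
            have e1 : G (2 * a - r + (N + r)) = pval a 0 :=
              hval _ (N + 2 * a) 0 hN2 (by omega) (by omega)
            have e2 : G (2 * a - r) = pval a (2 * a - r) :=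
              hval _ 0 (2 * a - r) ⟨0, by ring⟩ (by omega) (by omega)
            refine hsafe (2 * a - r) ?_
            rw [e1, e2, pval_lt (by omega), pval_lt (by omega)]
            omega
        · by_cases hsm : r < a
          · -- r odd, 3 ≤ r ≤ a - 1 : counterexample n = a - 1
            have e1 : G (a - 1 + (N + r)) = pval a (a - 1 + r) :=
              hval _ N (a - 1 + r) hN (by omega) (by omega)
            have e2 : G (a - 1) = pval a (a - 1) :=
              hval _ 0 (a - 1) ⟨0, by ring⟩ (by omega) (by omega)
            refine hsafe (a - 1) ?_
            rw [e1, e2, pval_mid (by omega) (by omega) (by omega), pval_lt (by omega)]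
            omega
          · -- r odd, a + 1 ≤ r ≤ 2a - 3 : counterexample n = 2a - 2 - r
            have e1 : G (2 * a - 2 - r + (N + r)) = pval a (2 * a - 2) :=
              hval _ N (2 * a - 2) hN (by omega) (by omega)
            have e2 : G (2 * a - 2 - r) = pval a (2 * a - 2 - r) :=
              hval _ 0 (2 * a - 2 - r) ⟨0, by ring⟩ (by omega) (by omega)
            refine hsafe (2 * a - 2 - r) ?_
            rw [e1, e2, pval_mid (by omega) (by omega) (by omega), pval_lt (by omega)]
            omega
      obtain ⟨q, hq⟩ := hN
      exact ⟨r, q, by rw [hq]; ring, hres⟩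
    · rintro ⟨s, m, rfl, hs⟩ n
      obtain ⟨N, r, hN, hr, rfl⟩ := hdec n
      obtain ⟨K, hK1, hK2⟩ : ∃ K, K = 2 * a * m ∧ (∃ q, N + K = 2 * a * q) := by
        obtain ⟨q, hq⟩ := hN
        exact ⟨2 * a * m, rfl, ⟨q + m, by rw [hq]; ring⟩⟩
      have hK3 : ∃ q, N + K + 2 * a = 2 * a * q := by
        obtain ⟨q, hq⟩ := hK2
        exact ⟨q + 1, by rw [hq]; ring⟩
      rw [← hK1]
      have e2 : G (N + r) = pval a r := hval _ N r hN hr rfl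
      rcases hs with rfl | hs2 | rfl
      · -- s = 1
        by_cases hce : r = 2 * a - 1
        · have e1 : G (N + r + (1 + K)) = pval a 0 :=
            hval _ (N + K + 2 * a) 0 hK3 (by omega) (by omega)
          rw [e1, e2, hce, pval_last (by omega), pval_lt (by omega)]
          omega
        · have e1 : G (N + r + (1 + K)) = pval a (r + 1) :=
            hval _ (N + K) (r + 1) hK2 (by omega) (by omega)
          rw [e1, e2]
          exact pstep a b ha hb r (by omega)
      · -- s = a
        rw [hs2]
        by_cases hce : r < a
        · have e1 : G (N + r + (a + K)) = pval a (r + a) :=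
            hval _ (N + K) (r + a) hK2 (by omega) (by omega)
          rw [e1, e2]
          rcases (show r = 0 ∨ (1 ≤ r ∧ r ≤ a - 2) ∨ r = a - 1 by omega) with h | ⟨hx, hy⟩ | h
          · have v1 : pval a (r + a) = 2 := by rw [show r + a = a by omega, pval_a (by omega)]
            have v2 : pval a r = r % 2 := pval_lt (by omega)
            omega
          · have v1 : pval a (r + a) = (r + a - a - 1) % 2 :=
              pval_mid (by omega) (by omega) (by omega)
            have v2 : pval a r = r % 2 := pval_lt (by omega)
            omega
          · have v1 : pval a (r + a) = 2 := by
              rw [show r + a = 2 * a - 1 by omega, pval_last (by omega)]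
            have v2 : pval a r = r % 2 := pval_lt (by omega)
            omega
        · have e1 : G (N + r + (a + K)) = pval a (r - a) :=
            hval _ (N + K + 2 * a) (r - a) hK3 (by omega) (by omega)
          rw [e1, e2]
          rcases (show r = a ∨ (a + 1 ≤ r ∧ r ≤ 2 * a - 2) ∨ r = 2 * a - 1 by omega)
            with h | ⟨hx, hy⟩ | h
          · have v1 : pval a (r - a) = 0 % 2 := by
              rw [show r - a = 0 by omega, pval_lt (by omega)]
            have v2 : pval a r = 2 := by rw [h, pval_a (by omega)]
            omega
          · have v1 : pval a (r - a) = (r - a) % 2 := pval_lt (by omega)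
            have v2 : pval a r = (r - a - 1) % 2 := pval_mid (by omega) (by omega) (by omega)
            omega
          · have v1 : pval a (r - a) = (a - 1) % 2 := by
              rw [show r - a = a - 1 by omega, pval_lt (by omega)]
            have v2 : pval a r = 2 := by rw [h, pval_last (by omega)]
            omega
      · -- s = 2a - 1
        by_cases hce : r = 0
        · have e1 : G (N + r + (2 * a - 1 + K)) = pval a (2 * a - 1) :=
            hval _ (N + K) (2 * a - 1) hK2 (by omega) (by omega)
          rw [e1, e2, pval_last (by omega), hce, pval_lt (by omega)]
          omega
        · have e1 : G (N + r + (2 * a - 1 + K)) = pval a (r - 1) :=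
            hval _ (N + K + 2 * a) (r - 1) hK3 (by omega) (by omega)
          rw [e1, e2]
          have := pstep a b ha hb (r - 1) (by omega)
          rw [show r - 1 + 1 = r by omega] at this
          exact fun h => this h.symm
end

section
/- Let a ≥ 2 be an even integer, and let G be the Grundy sequence of S({1, a, 2a + 1}). Then: (i) G(n + a + 1) = G(n) for all n ∈ ℕ; (ii) for 0 ≤ n < a + 1: G(n) = n mod 2 if n < a, and G(a) = 2; and (iii) for every c ≥ 1, G(n + c) ≠ G(n) holds for all n if and only if c = s + m(a + 1) for some m ∈ ℕ and s ∈ {1, a, 2a + 1} (the subtraction set is non-expandable). -/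
lemma mex_eq_of {X : Set ℕ} {k : ℕ} (h1 : k ∉ X) (h2 : ∀ j < k, j ∈ X) : mex X = k := by
  have hk : k ∈ {m | m ∉ X} := h1
  unfold mex
  refine le_antisymm (Nat.sInf_le hk) ?_
  by_contra h
  push_neg at h
  exact (Nat.sInf_mem ⟨k, hk⟩) (h2 _ h)

/-- the conjectured Grundy values -/
def Hfun (a n : ℕ) : ℕ := if n % (a+1) = a then 2 else (n % (a+1)) % 2

lemma Hfun_eval (a k t : ℕ) (ht : t < a + 1) :
    Hfun a ((a+1) * k + t) = if t = a then 2 else t % 2 := by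
  unfold Hfun
  rw [Nat.mul_add_mod, Nat.mod_eq_of_lt ht]

lemma Hfun_eval' (a n t k : ℕ) (ht : t < a + 1) (hk : n = (a+1) * k + t) :
    Hfun a n = if t = a then 2 else t % 2 := by
  subst hk; exact Hfun_eval a k t ht

lemma Hfun_period (a n : ℕ) : Hfun a (n + (a+1)) = Hfun a n := by
  unfold Hfun
  rw [Nat.add_mod_right]

lemma Hfun_period_mul (a m n : ℕ) : Hfun a (n + m * (a+1)) = Hfun a n := by
  induction m with
  | zero => simp
  | succ m ih =>
    have : n + (m+1) * (a+1) = (n + m * (a+1)) + (a+1) := by ring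
    rw [this, Hfun_period, ih]

lemma mem_X (a n v : ℕ) (G : ℕ → ℕ) :
    (v ∈ {v | ∃ s ∈ ({1, a, 2*a+1} : Finset ℕ), s ≤ n ∧ v = G (n - s)}) ↔
      (1 ≤ n ∧ v = G (n-1)) ∨ (a ≤ n ∧ v = G (n-a)) ∨ (2*a+1 ≤ n ∧ v = G (n-(2*a+1))) := by
  simp only [Set.mem_setOf_eq, Finset.mem_insert, Finset.mem_singleton]
  constructor
  · rintro ⟨s, (rfl|rfl|rfl), hle, rfl⟩ <;> tauto
  · rintro (⟨h, rfl⟩|⟨h, rfl⟩|⟨h, rfl⟩)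
    exacts [⟨1, by tauto⟩, ⟨a, by tauto⟩, ⟨2*a+1, by tauto⟩]

lemma grundy_eq (a : ℕ) (ha : 2 ≤ a) (haeven : Even a) (G : ℕ → ℕ)
    (hG : IsGrundy {1, a, 2*a+1} G) : ∀ n, G n = Hfun a n := by
  have ha2 : a % 2 = 0 := Nat.even_iff.mp haeven
  intro n
  induction n using Nat.strong_induction_on with
  | _ n IH =>
  rw [hG n]
  obtain ⟨q, r, hr, hn⟩ : ∃ q r, r < a + 1 ∧ n = (a+1) * q + r :=
    ⟨n / (a+1), n % (a+1), Nat.mod_lt _ (by omega), (Nat.div_add_mod n (a+1)).symm⟩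
  have hHn : Hfun a n = if r = a then 2 else r % 2 := Hfun_eval' a n r q hr hn
  rcases Nat.eq_zero_or_pos q with hq | hq
  · -- q = 0 : n = r ≤ a
    subst hq
    rcases Nat.eq_zero_or_pos r with hr0 | hr0
    · -- n = 0
      rw [hHn, if_neg (show ¬ r = a by omega)]
      apply mex_eq_of
      · rw [mem_X]; rintro (⟨h, _⟩|⟨h, _⟩|⟨h, _⟩) <;> omega
      · intro j hj; exact absurd hj (by omega)
    · by_cases hra : r = a
      · -- n = a
        have hGn1 : G (n-1) = 1 := by
          rw [IH (n-1) (by omega),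
            Hfun_eval' a (n-1) (a-1) 0 (by omega) (by omega), if_neg (by omega)]
          omega
        have hGna : G (n-a) = 0 := by
          rw [IH (n-a) (by omega),
            Hfun_eval' a (n-a) 0 0 (by omega) (by omega), if_neg (by omega)]
        rw [hHn, if_pos hra]
        apply mex_eq_of
        · rw [mem_X]
          rintro (⟨h, hv⟩|⟨h, hv⟩|⟨h, hv⟩) <;> omega
        · intro j hj
          rw [mem_X]
          interval_cases j
          · right; left; exact ⟨by omega, by omega⟩
          · left; exact ⟨by omega, by omega⟩
      · -- 1 ≤ r < a
        have hGn1 : G (n-1) = (r-1) % 2 := by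
          rw [IH (n-1) (by omega),
            Hfun_eval' a (n-1) (r-1) 0 (by omega) (by omega), if_neg (by omega)]
        rw [hHn, if_neg hra]
        apply mex_eq_of
        · rw [mem_X]
          rintro (⟨h, hv⟩|⟨h, hv⟩|⟨h, hv⟩) <;> omega
        · intro j hj
          rw [mem_X]
          left
          exact ⟨by omega, by omega⟩
  · -- q ≥ 1 : n ≥ a + 1
    obtain ⟨q', rfl⟩ : ∃ q', q = q' + 1 := ⟨q - 1, by omega⟩
    have hexp : (a+1) * (q'+1) = (a+1) * q' + (a+1) := by ring
    have hGn2a : 2*a+1 ≤ n → G (n-(2*a+1)) = G (n-a) := by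
      intro hle
      rw [IH (n-(2*a+1)) (by omega), IH (n-a) (by omega),
        show n - a = (n - (2*a+1)) + (a+1) from by omega, Hfun_period]
    rw [hHn]
    by_cases hra : r = a
    · -- r = a
      have hGn1 : G (n-1) = 1 := by
        rw [IH (n-1) (by omega),
          Hfun_eval' a (n-1) (a-1) (q'+1) (by omega) (by omega), if_neg (by omega)]
        omega
      have hGna : G (n-a) = 0 := by
        rw [IH (n-a) (by omega),
          Hfun_eval' a (n-a) 0 (q'+1) (by omega) (by omega), if_neg (by omega)]
      rw [if_pos hra]
      apply mex_eq_of
      · rw [mem_X]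
        rintro (⟨h, hv⟩|⟨h, hv⟩|⟨h, hv⟩)
        · omega
        · omega
        · rw [hGn2a h] at hv; omega
      · intro j hj
        rw [mem_X]
        interval_cases j
        · right; left; exact ⟨by omega, by omega⟩
        · left; exact ⟨by omega, by omega⟩
    · rw [if_neg hra]
      rcases Nat.eq_zero_or_pos r with h0 | h0
      · -- r = 0
        have hGn1 : G (n-1) = 2 := by
          rw [IH (n-1) (by omega),
            Hfun_eval' a (n-1) a q' (by omega) (by omega), if_pos rfl]
        have hGna : G (n-a) = 1 := by
          rw [IH (n-a) (by omega),
            Hfun_eval' a (n-a) 1 q' (by omega) (by omega), if_neg (by omega)]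
        apply mex_eq_of
        · rw [mem_X]
          rintro (⟨h, hv⟩|⟨h, hv⟩|⟨h, hv⟩)
          · omega
          · omega
          · rw [hGn2a h] at hv; omega
        · intro j hj; exact absurd hj (by omega)
      · -- 1 ≤ r ≤ a - 1
        have hGn1 : G (n-1) = (r-1) % 2 := by
          rw [IH (n-1) (by omega),
            Hfun_eval' a (n-1) (r-1) (q'+1) (by omega) (by omega), if_neg (by omega)]
        have hGna : G (n-a) = if r+1 = a then 2 else (r+1) % 2 := by
          rw [IH (n-a) (by omega),
            Hfun_eval' a (n-a) (r+1) q' (by omega) (by omega)]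
        apply mex_eq_of
        · rw [mem_X]
          rintro (⟨h, hv⟩|⟨h, hv⟩|⟨h, hv⟩)
          · omega
          · rcases eq_or_ne (r+1) a with he | he
            · rw [if_pos he] at hGna; omega
            · rw [if_neg he] at hGna; omega
          · rw [hGn2a h] at hv
            rcases eq_or_ne (r+1) a with he | he
            · rw [if_pos he] at hGna; omega
            · rw [if_neg he] at hGna; omega
        · intro j hj
          rw [mem_X]
          left
          exact ⟨by omega, by omega⟩

lemma Hfun_succ_ne (a : ℕ) (ha : 2 ≤ a) (ha2 : a % 2 = 0) (n : ℕ) :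
    Hfun a (n + 1) ≠ Hfun a n := by
  obtain ⟨q, r, hr, hn⟩ : ∃ q r, r < a + 1 ∧ n = (a+1) * q + r :=
    ⟨n / (a+1), n % (a+1), Nat.mod_lt _ (by omega), (Nat.div_add_mod n (a+1)).symm⟩
  have hexp : (a+1) * (q+1) = (a+1) * q + (a+1) := by ring
  have hHn : Hfun a n = if r = a then 2 else r % 2 := Hfun_eval' a n r q hr hn
  rcases eq_or_ne r a with h0 | h0
  · rw [Hfun_eval' a (n+1) 0 (q+1) (by omega) (by omega), hHn, if_pos h0,
      if_neg (show ¬ (0:ℕ) = a by omega)]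
    omega
  · rw [Hfun_eval' a (n+1) (r+1) q (by omega) (by omega), hHn, if_neg h0]
    rcases eq_or_ne (r+1) a with he | he
    · rw [if_pos he]; omega
    · rw [if_neg he]; omega

lemma Hfun_add_a_ne (a : ℕ) (ha : 2 ≤ a) (ha2 : a % 2 = 0) (n : ℕ) :
    Hfun a (n + a) ≠ Hfun a n := by
  obtain ⟨q, r, hr, hn⟩ : ∃ q r, r < a + 1 ∧ n = (a+1) * q + r :=
    ⟨n / (a+1), n % (a+1), Nat.mod_lt _ (by omega), (Nat.div_add_mod n (a+1)).symm⟩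
  have hexp : (a+1) * (q+1) = (a+1) * q + (a+1) := by ring
  have hHn : Hfun a n = if r = a then 2 else r % 2 := Hfun_eval' a n r q hr hn
  rcases Nat.eq_zero_or_pos r with h0 | h0
  · rw [Hfun_eval' a (n+a) a q (by omega) (by omega), hHn, if_pos rfl,
      if_neg (show ¬ r = a by omega)]
    omega
  · rw [Hfun_eval' a (n+a) (r-1) (q+1) (by omega) (by omega), hHn,
      if_neg (show ¬ r - 1 = a by omega)]
    rcases eq_or_ne r a with he | he
    · rw [if_pos he]; omega
    · rw [if_neg he]; omega

theorem stmt_10 (a : ℕ) (ha : 2 ≤ a) (haeven : Even a) (G : ℕ → ℕ)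
    (hG : IsGrundy {1, a, 2 * a + 1} G) :
    (∀ n, G (n + (a + 1)) = G n) ∧
    (∀ n < a + 1,
      (n < a → G n = n % 2) ∧
      (n = a → G n = 2)) ∧
    (∀ c, 1 ≤ c →
      ((∀ n, G (n + c) ≠ G n) ↔
        ∃ s m : ℕ, c = s + m * (a + 1) ∧ (s = 1 ∨ s = a ∨ s = 2 * a + 1))) := by
  have ha2 : a % 2 = 0 := Nat.even_iff.mp haeven
  have hGH := grundy_eq a ha haeven G hG
  refine ⟨?_, ?_, ?_⟩
  · intro n
    rw [hGH, hGH, Hfun_period]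
  · intro n hn
    constructor
    · intro hna
      rw [hGH, Hfun_eval' a n n 0 hn (by omega), if_neg (by omega)]
    · intro hna
      rw [hGH, Hfun_eval' a n n 0 hn (by omega), if_pos hna]
  · intro c hc
    constructor
    · intro hsafe
      set d := c % (a+1) with hd
      set q := c / (a+1) with hq
      have hdc : c = (a+1) * q + d := by
        rw [hd, hq]; exact (Nat.div_add_mod c (a+1)).symm
      have hdlt : d < a + 1 := Nat.mod_lt _ (by omega)
      have hd1a : d = 1 ∨ d = a := by
        by_contra hne
        push_neg at hne
        obtain ⟨hne1, hnea⟩ := hne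
        rcases Nat.even_or_odd d with hde | hdo
        · have hde2 : d % 2 = 0 := Nat.even_iff.mp hde
          have h0 := hsafe 0
          rw [hGH, hGH, Nat.zero_add,
            Hfun_eval' a c d q hdlt hdc,
            Hfun_eval' a 0 0 0 (by omega) (by omega),
            if_neg hnea, if_neg (show ¬ (0:ℕ) = a by omega)] at h0
          omega
        · have hdo2 : d % 2 = 1 := Nat.odd_iff.mp hdo
          have hd3 : 3 ≤ d := by omega
          have h0 := hsafe (a+1-d)
          have hexp : (a+1) * (q+1) = (a+1) * q + (a+1) := by ring
          rw [hGH, hGH,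
            Hfun_eval' a (a+1-d+c) 0 (q+1) (by omega) (by omega),
            Hfun_eval' a (a+1-d) (a+1-d) 0 (by omega) (by omega),
            if_neg (show ¬ (0:ℕ) = a by omega),
            if_neg (show ¬ a+1-d = a by omega)] at h0
          omega
      rcases hd1a with h1 | h1
      · exact ⟨1, q, by rw [mul_comm q (a+1)]; omega, Or.inl rfl⟩
      · exact ⟨a, q, by rw [mul_comm q (a+1)]; omega, Or.inr (Or.inl rfl)⟩
    · rintro ⟨s, m, rfl, hs⟩
      intro n
      rw [hGH, hGH, show n + (s + m * (a+1)) = (n + s) + m * (a+1) from by ring,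
        Hfun_period_mul]
      rcases hs with h | h | h <;> rw [h]
      · exact Hfun_succ_ne a ha ha2 n
      · exact Hfun_add_a_ne a ha ha2 n
      · rw [show n + (2*a+1) = (n + a) + (a+1) from by ring, Hfun_period]
        exact Hfun_add_a_ne a ha ha2 n
end
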